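/- Assume x̄ ≠ 0 and ε̃ ≥ 0, and set β = √(1 + ε̃/(3‖x̄‖²)). Then g(x) ≥ g(β·x̄) for every x ∈ ℝⁿ, with equality if and only if x = β·x̄ or x = −β·x̄; i.e. the set of global minimizers of g is exactly {β·x̄, −β·x̄}. -/

import Mathlib

/-!
With `a = ‖x̄‖²` the choice of `β` means `ε̃ = 3a(β² - 1)`, and then
`g x - g (β • x̄) = (3/4)(‖x‖² - β²a)² + (a‖x‖² - ⟪x̄, x⟫²)`:
a square plus the Cauchy–Schwarz gap. Both terms vanish exactly when `‖x‖ = |β| ‖x̄‖` and `x`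
is parallel to `x̄`, that is, when `x = ±β • x̄`.
-/

open scoped RealInnerProductSpace BigOperators

/-- The expectation `g` of the noisy phase-retrieval objective (up to an additive constant). -/
noncomputable def gObj (n : ℕ) (xbar : EuclideanSpace ℝ (Fin n)) (εt : ℝ)
    (x : EuclideanSpace ℝ (Fin n)) : ℝ :=
  (3 / 4) * (‖x‖ ^ 4 + ‖xbar‖ ^ 4) - (1 / 2) * ‖xbar‖ ^ 2 * ‖x‖ ^ 2 - ⟪xbar, x⟫ ^ 2
    - (εt / 2) * (‖x‖ ^ 2 - ‖xbar‖ ^ 2)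

/-- The gradient of `g`. -/
noncomputable def gGrad (n : ℕ) (xbar : EuclideanSpace ℝ (Fin n)) (εt : ℝ)
    (x : EuclideanSpace ℝ (Fin n)) : EuclideanSpace ℝ (Fin n) :=
  (3 * ‖x‖ ^ 2) • x - (2 * ⟪xbar, x⟫) • xbar - (‖xbar‖ ^ 2 + εt) • x

section InnerProductSpace

variable {F : Type*} [NormedAddCommGroup F] [InnerProductSpace ℝ F]

theorem sq_real_inner_le_sq_norm_mul_sq_norm (x y : F) : ⟪x, y⟫ ^ 2 ≤ ‖x‖ ^ 2 * ‖y‖ ^ 2 := by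
  rw [← mul_pow, ← sq_abs]
  exact pow_le_pow_left₀ (abs_nonneg _) (abs_real_inner_le_norm x y) 2

theorem exists_eq_smul_of_sq_real_inner_eq {x y : F} (hx : x ≠ 0)
    (h : ⟪x, y⟫ ^ 2 = ‖x‖ ^ 2 * ‖y‖ ^ 2) : ∃ r : ℝ, y = r • x := by
  have habs : ‖⟪x, y⟫‖ = ‖x‖ * ‖y‖ := by
    rw [Real.norm_eq_abs, ← sq_eq_sq₀ (abs_nonneg _) (by positivity), sq_abs, h, mul_pow]
  have hpar : x = 0 ∨ ∃ r : ℝ, y = r • x := ((norm_inner_eq_norm_tfae ℝ x y).out 0 2).1 habs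
  exact hpar.resolve_left hx

theorem sq_norm_eq_and_sq_real_inner_eq_iff {x y : F} (hx : x ≠ 0) (β : ℝ) :
    ‖y‖ ^ 2 = β ^ 2 * ‖x‖ ^ 2 ∧ ⟪x, y⟫ ^ 2 = ‖x‖ ^ 2 * ‖y‖ ^ 2 ↔
      y = β • x ∨ y = -(β • x) := by
  constructor
  · rintro ⟨hnorm, hinner⟩
    obtain ⟨r, rfl⟩ := exists_eq_smul_of_sq_real_inner_eq hx hinner
    have hx2 : ‖x‖ ^ 2 ≠ 0 := by positivity
    rw [norm_smul, mul_pow, Real.norm_eq_abs, sq_abs] at hnorm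
    rcases sq_eq_sq_iff_eq_or_eq_neg.1 (mul_right_cancel₀ hx2 hnorm) with rfl | rfl
    · exact Or.inl rfl
    · exact Or.inr (neg_smul β x)
  · rintro (rfl | rfl) <;> refine ⟨?_, ?_⟩ <;>
      simp only [norm_neg, inner_neg_right, norm_smul, inner_smul_right, real_inner_self_eq_norm_sq,
        Real.norm_eq_abs, mul_pow, sq_abs, neg_sq] <;>
      ring

end InnerProductSpace

theorem gObj_sub_gObj_smul (n : ℕ) (xbar : EuclideanSpace ℝ (Fin n)) (εt β : ℝ)
    (hεt : εt = 3 * ‖xbar‖ ^ 2 * (β ^ 2 - 1)) (x : EuclideanSpace ℝ (Fin n)) :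
    gObj n xbar εt x - gObj n xbar εt (β • xbar) =
      3 / 4 * (‖x‖ ^ 2 - β ^ 2 * ‖xbar‖ ^ 2) ^ 2 + (‖xbar‖ ^ 2 * ‖x‖ ^ 2 - ⟪xbar, x⟫ ^ 2) := by
  simp only [gObj, norm_smul, inner_smul_right, real_inner_self_eq_norm_sq, Real.norm_eq_abs,
    mul_pow, hεt]
  rw [show |β| ^ 4 = (β ^ 2) ^ 2 by rw [← sq_abs β]; ring, sq_abs]
  ring

/-- the set of global minimizers of `g` is exactly `{β·x̄, −β·x̄}`. -/
theorem stmt9 (n : ℕ) (xbar : EuclideanSpace ℝ (Fin n)) (hxbar : xbar ≠ 0)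
    (εt : ℝ) (hεt : 0 ≤ εt) (β : ℝ) (hβ : β = Real.sqrt (1 + εt / (3 * ‖xbar‖ ^ 2))) :
    ∀ x : EuclideanSpace ℝ (Fin n),
      gObj n xbar εt (β • xbar) ≤ gObj n xbar εt x ∧
        (gObj n xbar εt x = gObj n xbar εt (β • xbar) ↔
          x = β • xbar ∨ x = -(β • xbar)) := by
  intro x
  have hεβ : εt = 3 * ‖xbar‖ ^ 2 * (β ^ 2 - 1) := by
    rw [hβ, Real.sq_sqrt (by positivity)]
    field_simp
    ring
  have hgap := gObj_sub_gObj_smul n xbar εt β hεβ x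
  have hsq : 0 ≤ 3 / 4 * (‖x‖ ^ 2 - β ^ 2 * ‖xbar‖ ^ 2) ^ 2 := by positivity
  have hcs : 0 ≤ ‖xbar‖ ^ 2 * ‖x‖ ^ 2 - ⟪xbar, x⟫ ^ 2 :=
    sub_nonneg.2 (sq_real_inner_le_sq_norm_mul_sq_norm xbar x)
  refine ⟨by linarith, ?_⟩
  rw [← sq_norm_eq_and_sq_real_inner_eq_iff hxbar, ← sub_eq_zero, hgap,
    add_eq_zero_iff_of_nonneg hsq hcs]
  norm_num [sub_eq_zero, eq_comm (a := ⟪xbar, x⟫ ^ 2)]
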